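/- Let n ≥ 2, let S^{n} be the unit sphere in ℝ^{n+1}, and let v be a smooth unit tangent vector field on S^{n} (‖v(x)‖ = 1 and ⟨v(x), x⟩ = 0 for all x). For t > 0 define φ_t : S^{n} → √(1+t²)·S^{n} by φ_t(x) = x + t·v(x). Then there exists ε > 0 such that for all t with 0 < t < ε, the map φ_t is a diffeomorphism from S^{n} onto the sphere of radius √(1+t²). -/

import Mathlib

open MeasureTheory Metric Finset
open scoped RealInnerProductSpace

noncomputable section

/-- `ℝⁿ` as a Euclidean space. -/
abbrev Euc (n : ℕ) : Type := EuclideanSpace ℝ (Fin n)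

/-- The unit sphere `Sⁿ⁻¹ ⊆ ℝⁿ`. -/
def unitSphere (n : ℕ) : Set (Euc n) := Metric.sphere (0 : Euc n) 1

/-- Orthogonal projection of `ℝⁿ` onto the tangent space `x^⊥ = T_x Sⁿ⁻¹` of the unit
sphere at `x`, regarded as a map `ℝⁿ → ℝⁿ`. -/
def tangProj (n : ℕ) (x : Euc n) : Euc n →L[ℝ] Euc n :=
  (Submodule.span ℝ {x})ᗮ.subtypeL ∘L (Submodule.span ℝ {x})ᗮ.orthogonalProjection

/-- The covariant derivative (in the Levi-Civita connection of the round sphere) of a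
tangent vector field `v` at `x`, as a linear operator `Y ↦ ∇_Y v` on `ℝⁿ`:
the derivative of `v` within the sphere in the tangent direction, followed by orthogonal
projection onto the tangent space `x^⊥`.  It vanishes on `(T_x S)^⊥` and takes values in
`T_x S`, so it represents the operator `∇v : T_x S → T_x S`. -/
def covOp (n : ℕ) (v : Euc n → Euc n) (x : Euc n) : Euc n →L[ℝ] Euc n :=
  tangProj n x ∘L fderivWithin ℝ v (unitSphere n) x ∘L tangProj n x

/-- `v` is solenoidal (divergence free) on `U`: the trace of `Y ↦ ∇_Y v` on `T_x S`
vanishes at every `x ∈ U` (as `covOp` vanishes on `(T_x S)^⊥` and maps into `T_x S`,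
its trace on the ambient space equals its trace on `T_x S`). -/
def Solenoidal (n : ℕ) (v : Euc n → Euc n) (U : Set (Euc n)) : Prop :=
  ∀ x ∈ U, LinearMap.trace ℝ (Euc n) (covOp n v x : Euc n →ₗ[ℝ] Euc n) = 0

/-- `‖∇v‖²(x) = Σ_a ‖∇_{e_a} v‖²`: the squared Hilbert–Schmidt norm of `∇v` at `x`,
computed with an orthonormal basis of `ℝⁿ` (this agrees with the sum over an orthonormal
basis of `T_x S` since `covOp` vanishes on `(T_x S)^⊥`). -/
def gradSq (n : ℕ) (v : Euc n → Euc n) (x : Euc n) : ℝ :=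
  ∑ i : Fin n, ‖covOp n v x (EuclideanSpace.basisFun (Fin n) ℝ i)‖ ^ 2

/-- The energy of the unit vector field `v` on `K ⊆ S^{2k+1}`:
`E(v) = ((2k+1)/2)·vol(K) + (1/2)∫_K ‖∇v‖²`, with `vol` the `(2k+1)`-dimensional
Hausdorff measure. -/
def energyOn (k : ℕ) (v : Euc (2 * k + 2) → Euc (2 * k + 2)) (K : Set (Euc (2 * k + 2))) : ℝ :=
  ((2 * (k : ℝ) + 1) / 2) * (μH[(2 * (k : ℝ) + 1)] K).toReal
    + (1 / 2) * ∫ x in K, gradSq (2 * k + 2) v x ∂(μH[(2 * (k : ℝ) + 1)])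

/-- The Hopf vector field `H(x) = ix` on `ℝ^{2k+2} ≅ ℂ^{k+1}`, where the identification
pairs the coordinates as `(x₀, x₁), (x₂, x₃), …`: on each pair `(a, b) = a + bi` we have
`i(a+bi) = -b + ai`. -/
def hopf (k : ℕ) (x : Euc (2 * k + 2)) : Euc (2 * k + 2) := WithLp.toLp 2 (fun i =>
  if h : (i : ℕ) % 2 = 0 then -x ⟨(i : ℕ) + 1, by have := i.isLt; omega⟩
  else x ⟨(i : ℕ) - 1, by have := i.isLt; omega⟩)

/-- The boundary `∂K` of a full-dimensional compact submanifold-with-boundary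
`K` of the unit sphere: its topological frontier relative to the sphere. -/
def relFrontier (n : ℕ) (K : Set (Euc n)) : Set (Euc n) :=
  closure K ∩ closure (unitSphere n \ K)

/-- `U` is an open subset of the unit sphere `Sⁿ⁻¹` (in the subspace topology). -/
def IsOpenInSphere (n : ℕ) (U : Set (Euc n)) : Prop :=
  U ⊆ unitSphere n ∧ ∃ V : Set (Euc n), IsOpen V ∧ U = V ∩ unitSphere n


namespace St3Aux

lemma norm_inv_smul {m : ℕ} {y : Euc m} (hy : y ≠ 0) : ‖(‖y‖⁻¹ • y)‖ = 1 := by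
  rw [norm_smul, norm_inv, norm_norm, inv_mul_cancel₀ (norm_ne_zero_iff.2 hy)]

variable {m : ℕ} (v : Euc m → Euc m)

/-- The degree-1 homogeneous extension of the vector field `v` on the sphere:
`‖y‖ • v(y/‖y‖)`. -/
def Vf (y : Euc m) : Euc m := ‖y‖ • v (‖y‖⁻¹ • y)

lemma Vf_sphere {x : Euc m} (hx : ‖x‖ = 1) : Vf v x = v x := by
  rw [Vf, hx, inv_one, one_smul, one_smul]

lemma Vf_contDiffOn (hs : ContDiffOn ℝ (⊤ : ℕ∞) v (unitSphere m)) :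
    ContDiffOn ℝ (⊤ : ℕ∞) (Vf v) {y : Euc m | y ≠ 0} := by
  have hr : ContDiffOn ℝ (⊤ : ℕ∞) (fun y : Euc m => ‖y‖⁻¹ • y) {y | y ≠ 0} := by
    intro y hy
    exact (((contDiffAt_norm (𝕜 := ℝ) hy).inv (norm_ne_zero_iff.2 hy)).smul
      contDiffAt_id).contDiffWithinAt
  have hmaps : Set.MapsTo (fun y : Euc m => ‖y‖⁻¹ • y) {y | y ≠ 0} (unitSphere m) := by
    intro y hy
    simpa [unitSphere, mem_sphere_zero_iff_norm] using norm_inv_smul (m := m) hy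
  have hvr : ContDiffOn ℝ (⊤ : ℕ∞) (fun y : Euc m => v (‖y‖⁻¹ • y)) {y | y ≠ 0} :=
    hs.comp hr hmaps
  refine ContDiffOn.smul (f := fun y : Euc m => ‖y‖) ?_ hvr
  intro y hy; exact (contDiffAt_norm (𝕜 := ℝ) hy).contDiffWithinAt

lemma norm_add_smul_Vf (hunit : ∀ x ∈ unitSphere m, ‖v x‖ = 1)
    (htang : ∀ x ∈ unitSphere m, ⟪v x, x⟫ = 0)
    {y : Euc m} (hy : y ≠ 0) (s : ℝ) :
    ‖y + s • Vf v y‖ = Real.sqrt (1 + s ^ 2) * ‖y‖ := by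
  set r : Euc m := ‖y‖⁻¹ • y with hr
  have hrS : r ∈ unitSphere m := by
    simpa [unitSphere, mem_sphere_zero_iff_norm] using norm_inv_smul (m := m) hy
  have hyr : y = ‖y‖ • r := by
    rw [hr, smul_smul, mul_inv_cancel₀ (norm_ne_zero_iff.2 hy), one_smul]
  have hVf : Vf v y = ‖y‖ • v r := rfl
  have h0 : ⟪y, v r⟫ = 0 := by
    conv_lhs => rw [hyr]
    rw [real_inner_smul_left, real_inner_comm, htang r hrS, mul_zero]
  have hinner : ⟪y, s • Vf v y⟫ = 0 := by
    rw [hVf, real_inner_smul_right, real_inner_smul_right, h0]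
    ring
  have hnormV : ‖s • Vf v y‖ = |s| * ‖y‖ := by
    rw [hVf, norm_smul, norm_smul, norm_norm, hunit r hrS, mul_one, Real.norm_eq_abs]
  have hsq : ‖y + s • Vf v y‖ ^ 2 = (1 + s ^ 2) * ‖y‖ ^ 2 := by
    rw [norm_add_sq_real, hinner, hnormV, mul_pow, sq_abs]
    ring
  have h1 : (0:ℝ) ≤ 1 + s ^ 2 := by positivity
  calc ‖y + s • Vf v y‖ = Real.sqrt (‖y + s • Vf v y‖ ^ 2) :=
        (Real.sqrt_sq (norm_nonneg _)).symm
    _ = Real.sqrt ((1 + s ^ 2) * ‖y‖ ^ 2) := by rw [hsq]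
    _ = Real.sqrt (1 + s ^ 2) * ‖y‖ := by
        rw [Real.sqrt_mul h1, Real.sqrt_sq (norm_nonneg _)]

end St3Aux


set_option maxHeartbeats 1600000

/-- If `v` is a smooth unit tangent vector field on `Sⁿ ⊆ ℝ^{n+1}`
(`n ≥ 2`), then there is `ε > 0` such that for all `0 < t < ε` the map
`φ_t(x) = x + t·v(x)` is a diffeomorphism from `Sⁿ` onto the sphere of radius `√(1+t²)`:
a smooth bijection between the two spheres with smooth inverse. -/
theorem exists_eps_diffeo (n : ℕ) (hn : 2 ≤ n)
    (v : Euc (n + 1) → Euc (n + 1))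
    (hsmooth : ContDiffOn ℝ (⊤ : ℕ∞) v (unitSphere (n + 1)))
    (hunit : ∀ x ∈ unitSphere (n + 1), ‖v x‖ = 1)
    (htang : ∀ x ∈ unitSphere (n + 1), ⟪v x, x⟫ = 0) :
    ∃ ε > (0 : ℝ), ∀ t : ℝ, 0 < t → t < ε →
      ∃ g : Euc (n + 1) → Euc (n + 1),
        Set.BijOn (fun x => x + t • v x) (unitSphere (n + 1))
          (Metric.sphere (0 : Euc (n + 1)) (Real.sqrt (1 + t ^ 2))) ∧
        ContDiffOn ℝ (⊤ : ℕ∞) (fun x => x + t • v x) (unitSphere (n + 1)) ∧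
        ContDiffOn ℝ (⊤ : ℕ∞) g (Metric.sphere (0 : Euc (n + 1)) (Real.sqrt (1 + t ^ 2))) ∧
        (∀ x ∈ unitSphere (n + 1), g (x + t • v x) = x) ∧
        (∀ y ∈ Metric.sphere (0 : Euc (n + 1)) (Real.sqrt (1 + t ^ 2)),
          (fun x => x + t • v x) (g y) = y) := by
  classical
  have hSmem : ∀ x : Euc (n+1), x ∈ unitSphere (n+1) ↔ ‖x‖ = 1 := fun x =>
    mem_sphere_zero_iff_norm
  set V : Euc (n+1) → Euc (n+1) := St3Aux.Vf v with hVdef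
  have hU : IsOpen {y : Euc (n+1) | y ≠ 0} := isOpen_compl_singleton
  have hVU : ContDiffOn ℝ (⊤ : ℕ∞) V {y : Euc (n+1) | y ≠ 0} := St3Aux.Vf_contDiffOn v hsmooth
  have hVs : ∀ x ∈ unitSphere (n+1), V x = v x := fun x hx =>
    St3Aux.Vf_sphere v ((hSmem x).1 hx)
  have hnorm : ∀ y : Euc (n+1), y ≠ 0 →
      ∀ s : ℝ, ‖y + s • V y‖ = Real.sqrt (1 + s ^ 2) * ‖y‖ :=
    fun y hy s => St3Aux.norm_add_smul_Vf v hunit htang hy s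
  have hSne : ∀ x ∈ unitSphere (n+1), x ≠ 0 := by
    intro x hx h0
    have := (hSmem x).1 hx
    rw [h0] at this; simp at this
  -- Derivative bound on the annulus K
  set K : Set (Euc (n+1)) := {y : Euc (n+1) | ‖y‖ ∈ Set.Icc (1/2 : ℝ) 2} with hKdef
  have hKmem : ∀ y : Euc (n+1), y ∈ K ↔ 1/2 ≤ ‖y‖ ∧ ‖y‖ ≤ 2 := fun y => Set.mem_Icc
  have hKU : K ⊆ {y : Euc (n+1) | y ≠ 0} := by
    intro y hy h0
    rw [hKmem, h0] at hy
    simp only [norm_zero] at hy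
    linarith [hy.1]
  have hKclosed : IsClosed K := isClosed_Icc.preimage continuous_norm
  have hKcpt : IsCompact K := by
    refine (isCompact_closedBall (0 : Euc (n+1)) 2).of_isClosed_subset hKclosed ?_
    intro y hy
    exact mem_closedBall_zero_iff.2 ((hKmem y).1 hy).2
  have hfc : ContinuousOn (fderiv ℝ V) {y : Euc (n+1) | y ≠ 0} :=
    hVU.continuousOn_fderiv_of_isOpen hU (by simp)
  obtain ⟨M0, hM0⟩ := hKcpt.exists_bound_of_continuousOn (hfc.mono hKU)
  set M : ℝ := max M0 4 with hMdef
  have hM4 : (4:ℝ) ≤ M := le_max_right _ _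
  have hMb : ∀ y ∈ K, ‖fderiv ℝ V y‖ ≤ M := fun y hy => (hM0 y hy).trans (le_max_left _ _)
  have hMpos : (0:ℝ) < M + 1 := by linarith
  refine ⟨1 / (M + 1), by positivity, ?_⟩
  intro t ht htε
  have htM : t * M < 1 := by
    have h1 : t * (M + 1) < 1 := by
      have := (lt_div_iff₀ hMpos).1 htε
      linarith
    nlinarith
  -- Notation
  set c : ℝ := Real.sqrt (1 + t ^ 2) with hcdef
  have hcpos : 0 < c := Real.sqrt_pos.2 (by positivity)
  set T : Set (Euc (n+1)) := Metric.sphere (0 : Euc (n+1)) c with hTdef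
  set φ : Euc (n+1) → Euc (n+1) := fun x => x + t • v x with hφdef
  set Φ : Euc (n+1) → Euc (n+1) := fun y => y + t • V y with hΦdef
  have hφΦ : ∀ x ∈ unitSphere (n+1), Φ x = φ x := by
    intro x hx
    simp only [hΦdef, hφdef, hVs x hx]
  have hSK : unitSphere (n+1) ⊆ K := by
    intro x hx
    have h1 := (hSmem x).1 hx
    rw [hKmem, h1]
    norm_num
  -- Lipschitz bound for V on the sphere
  have hVnorm1 : ∀ x ∈ unitSphere (n+1), ‖V x‖ = 1 := by
    intro x hx; rw [hVs x hx]; exact hunit x hx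
  have hlip : ∀ x ∈ unitSphere (n+1), ∀ y ∈ unitSphere (n+1),
      ‖V x - V y‖ ≤ M * ‖x - y‖ := by
    intro x hx y hy
    rcases le_or_gt ‖x - y‖ (1/2) with hxy | hxy
    · have hseg : segment ℝ y x ⊆ K := by
        rintro z ⟨a, b, ha, hb, hab, rfl⟩
        have ha1 : a ≤ 1 := by linarith
        have hzx : a • y + b • x - x = a • (y - x) := by
          have hb' : b = 1 - a := by linarith
          rw [hb']
          module
        have h1 : ‖a • y + b • x - x‖ ≤ 1 / 2 := by
          rw [hzx, norm_smul, Real.norm_eq_abs, abs_of_nonneg ha, norm_sub_rev]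
          nlinarith [norm_nonneg (x - y)]
        have hx1 : ‖x‖ = 1 := (hSmem x).1 hx
        have hlo : 1/2 ≤ ‖a • y + b • x‖ := by
          have h2 : ‖x‖ - ‖a • y + b • x‖ ≤ ‖x - (a • y + b • x)‖ :=
            norm_sub_norm_le _ _
          rw [norm_sub_rev] at h2
          rw [hx1] at h2
          linarith
        have hhi : ‖a • y + b • x‖ ≤ 2 := by
          have h3 : a • y + b • x = x + (a • y + b • x - x) := by abel
          calc ‖a • y + b • x‖ = ‖x + (a • y + b • x - x)‖ := by rw [← h3]
            _ ≤ ‖x‖ + ‖a • y + b • x - x‖ := norm_add_le _ _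
            _ ≤ 1 + 1/2 := by rw [hx1]; linarith
            _ ≤ 2 := by norm_num
        exact (hKmem _).2 ⟨hlo, hhi⟩
      have hdiff : ∀ z ∈ segment ℝ y x, DifferentiableAt ℝ V z := by
        intro z hz
        exact (hVU.contDiffAt (hU.mem_nhds (fun h0 => hKU (hseg hz) h0))).differentiableAt (by simp)
      have := Convex.norm_image_sub_le_of_norm_fderiv_le hdiff
        (fun z hz => hMb z (hseg hz)) (convex_segment y x)
        (left_mem_segment ℝ y x) (right_mem_segment ℝ y x)
      simpa using this
    · have h2 : ‖V x - V y‖ ≤ 2 := by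
        calc ‖V x - V y‖ ≤ ‖V x‖ + ‖V y‖ := norm_sub_le _ _
          _ = 2 := by rw [hVnorm1 x hx, hVnorm1 y hy]; norm_num
      calc ‖V x - V y‖ ≤ 2 := h2
        _ ≤ M * ‖x - y‖ := by nlinarith
  -- Injectivity of φ on the sphere
  have hinj : Set.InjOn φ (unitSphere (n+1)) := by
    intro x hx y hy hxy
    by_contra hne
    have h3 : x + t • V x = y + t • V y := by
      rw [hVs x hx, hVs y hy]; exact hxy
    have h2 : x - y = t • V y - t • V x := by
      rw [sub_eq_sub_iff_add_eq_add]
      exact h3.trans (add_comm _ _)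
    have h1 : x - y = t • (V y - V x) := by
      rw [smul_sub]; exact h2
    have h4 : ‖x - y‖ ≤ t * (M * ‖y - x‖) := by
      rw [h1, norm_smul, Real.norm_eq_abs, abs_of_pos ht]
      exact mul_le_mul_of_nonneg_left (hlip y hy x hx) ht.le
    rw [norm_sub_rev y x] at h4
    have hpos : 0 < ‖x - y‖ := norm_pos_iff.2 (sub_ne_zero.2 hne)
    nlinarith
  -- MapsTo
  have hmaps : Set.MapsTo φ (unitSphere (n+1)) T := by
    intro x hx
    have h1 := hnorm x (hSne x hx) t
    show x + t • v x ∈ Metric.sphere (0 : Euc (n+1)) c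
    rw [mem_sphere_zero_iff_norm, ← hVs x hx, h1, (hSmem x).1 hx, mul_one]
  -- Smoothness of φ on the sphere
  have hφsm : ContDiffOn ℝ (⊤ : ℕ∞) φ (unitSphere (n+1)) :=
    contDiffOn_id.add (hsmooth.const_smul t)
  -- Smoothness of Φ off the origin
  have hΦcd : ∀ y : Euc (n+1), y ≠ 0 → ContDiffAt ℝ (⊤ : ℕ∞) Φ y := by
    intro y hy
    exact contDiffAt_id.add ((hVU.contDiffAt (hU.mem_nhds hy)).const_smul t)
  -- Invertible derivative of Φ on K
  have key : ∀ y ∈ K, ∃ e : Euc (n+1) ≃L[ℝ] Euc (n+1),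
      HasFDerivAt Φ (e : Euc (n+1) →L[ℝ] Euc (n+1)) y := by
    intro y hyK
    have hy0 : y ≠ 0 := fun h0 => hKU hyK h0
    have hd : DifferentiableAt ℝ V y :=
      (hVU.contDiffAt (hU.mem_nhds hy0)).differentiableAt (by simp)
    set A : Euc (n+1) →L[ℝ] Euc (n+1) := fderiv ℝ V y with hAdef
    have hA : HasFDerivAt V A y := hd.hasFDerivAt
    have hAM : ‖A‖ ≤ M := hMb y hyK
    set f' : Euc (n+1) →L[ℝ] Euc (n+1) := ContinuousLinearMap.id ℝ (Euc (n+1)) + t • A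
      with hf'def
    have hf' : HasFDerivAt Φ f' y := (hasFDerivAt_id y).add (hA.const_smul t)
    have hker : ∀ z : Euc (n+1), f' z = 0 → z = 0 := by
      intro z hz
      by_contra hz0
      have hz1 : z + t • A z = 0 := by
        simpa [hf'def, ContinuousLinearMap.add_apply] using hz
      have hz2 : z = -(t • A z) := by
        rw [eq_neg_iff_add_eq_zero]; exact hz1
      have h9 : ‖z‖ = t * ‖A z‖ := by
        conv_lhs => rw [hz2]
        rw [norm_neg, norm_smul, Real.norm_eq_abs, abs_of_pos ht]
      have h10 : ‖A z‖ ≤ M * ‖z‖ :=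
        (A.le_opNorm z).trans (mul_le_mul_of_nonneg_right hAM (norm_nonneg z))
      have hpos : 0 < ‖z‖ := norm_pos_iff.2 hz0
      nlinarith [mul_le_mul_of_nonneg_left h10 ht.le, mul_pos (sub_pos.2 htM) hpos]
    have hinj' : Function.Injective (f' : Euc (n+1) →ₗ[ℝ] Euc (n+1)) :=
      (injective_iff_map_eq_zero _).2 hker
    have hsurj' : Function.Surjective (f' : Euc (n+1) →ₗ[ℝ] Euc (n+1)) :=
      LinearMap.injective_iff_surjective.1 hinj'
    refine ⟨(LinearEquiv.ofBijective (f' : Euc (n+1) →ₗ[ℝ] Euc (n+1))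
      ⟨hinj', hsurj'⟩).toContinuousLinearEquiv, ?_⟩
    have hco : ((LinearEquiv.ofBijective (f' : Euc (n+1) →ₗ[ℝ] Euc (n+1))
        ⟨hinj', hsurj'⟩).toContinuousLinearEquiv : Euc (n+1) →L[ℝ] Euc (n+1)) = f' := by
      ext z; rfl
    rw [hco]; exact hf'
  -- Openness of the image of the annulus
  set W : Set (Euc (n+1)) := {y : Euc (n+1) | ‖y‖ ∈ Set.Ioo (1/2 : ℝ) 2} with hWdef
  have hWmem : ∀ y : Euc (n+1), y ∈ W ↔ 1/2 < ‖y‖ ∧ ‖y‖ < 2 := fun y => Set.mem_Ioo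
  have hWopen : IsOpen W := isOpen_Ioo.preimage continuous_norm
  have hWK : W ⊆ K := by
    intro y hy
    obtain ⟨h1, h2⟩ := (hWmem y).1 hy
    exact (hKmem y).2 ⟨h1.le, h2.le⟩
  have hSW : unitSphere (n+1) ⊆ W := by
    intro x hx
    have h1 := (hSmem x).1 hx
    rw [hWmem, h1]
    norm_num
  have hOopen : IsOpen (Φ '' W) := by
    rw [isOpen_iff_mem_nhds]
    rintro _ ⟨y, hyW, rfl⟩
    obtain ⟨e, he⟩ := key y (hWK hyW)
    have hy0 : y ≠ 0 := fun h0 => hKU (hWK hyW) h0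
    have hstrict : HasStrictFDerivAt Φ (e : Euc (n+1) →L[ℝ] Euc (n+1)) y :=
      (hΦcd y hy0).hasStrictFDerivAt' he (by simp)
    rw [← hstrict.map_nhds_eq_of_equiv]
    exact Filter.image_mem_map (hWopen.mem_nhds hyW)
  -- Surjectivity
  have hΦφS : Φ '' unitSphere (n+1) = φ '' unitSphere (n+1) := Set.image_congr hφΦ
  have hcap : Φ '' W ∩ T ⊆ φ '' unitSphere (n+1) := by
    rintro z ⟨⟨u, huW, rfl⟩, hzT⟩
    have hu0 : u ≠ 0 := fun h0 => hKU (hWK huW) h0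
    have h1 : ‖Φ u‖ = c * ‖u‖ := hnorm u hu0 t
    have h2 : ‖Φ u‖ = c := mem_sphere_zero_iff_norm.1 hzT
    have hu1 : ‖u‖ = 1 := by
      have h5 : c * ‖u‖ = c * 1 := by rw [← h1, h2, mul_one]
      exact mul_left_cancel₀ hcpos.ne' h5
    have huS : u ∈ unitSphere (n+1) := (hSmem u).2 hu1
    exact ⟨u, huS, (hφΦ u huS).symm⟩
  have hScpt : IsCompact (unitSphere (n+1)) := isCompact_sphere (0 : Euc (n+1)) 1
  have hcompact : IsCompact (φ '' unitSphere (n+1)) :=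
    hScpt.image_of_continuousOn (hφsm.continuousOn)
  obtain ⟨x₀, hx₀⟩ : (unitSphere (n+1)).Nonempty :=
    NormedSpace.sphere_nonempty.mpr zero_le_one
  have hTsub : T ⊆ φ '' unitSphere (n+1) := by
    intro z hzT
    by_contra hzC
    have hrank : 1 < Module.rank ℝ (Euc (n+1)) := by
      have h1 : (Module.finrank ℝ (Euc (n+1)) : Cardinal) = Module.rank ℝ (Euc (n+1)) :=
        Module.finrank_eq_rank ℝ (Euc (n+1))
      rw [← h1]
      have h2 : Module.finrank ℝ (Euc (n+1)) = n + 1 := finrank_euclideanSpace_fin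
      rw [h2]
      exact_mod_cast (by omega : 1 < n + 1)
    have hpre : IsPreconnected T :=
      (isConnected_sphere hrank (0 : Euc (n+1)) hcpos.le).isPreconnected
    have hcover : T ⊆ Φ '' W ∪ (φ '' unitSphere (n+1))ᶜ := by
      intro w hw
      by_cases hwS : w ∈ φ '' unitSphere (n+1)
      · left
        rw [← hΦφS] at hwS
        exact Set.image_mono hSW hwS
      · right; exact hwS
    have hne1 : (T ∩ Φ '' W).Nonempty := by
      refine ⟨φ x₀, hmaps hx₀, ?_⟩
      rw [← hφΦ x₀ hx₀]
      exact Set.mem_image_of_mem Φ (hSW hx₀)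
    have hne2 : (T ∩ (φ '' unitSphere (n+1))ᶜ).Nonempty := ⟨z, hzT, hzC⟩
    obtain ⟨w, hwT, hw1, hw2⟩ :=
      hpre (Φ '' W) (φ '' unitSphere (n+1))ᶜ hOopen hcompact.isClosed.isOpen_compl
        hcover hne1 hne2
    exact hw2 (hcap ⟨hw1, hwT⟩)
  -- The inverse map
  set g : Euc (n+1) → Euc (n+1) := Function.invFunOn φ (unitSphere (n+1)) with hgdef
  have hexists : ∀ z ∈ T, ∃ x ∈ unitSphere (n+1), φ x = z := by
    intro z hz
    obtain ⟨x, hxS, hxz⟩ := hTsub hz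
    exact ⟨x, hxS, hxz⟩
  have hgmem : ∀ z ∈ T, g z ∈ unitSphere (n+1) := fun z hz =>
    Function.invFunOn_mem (hexists z hz)
  have hgeq : ∀ z ∈ T, φ (g z) = z := fun z hz => Function.invFunOn_eq (hexists z hz)
  have hgleft : ∀ x ∈ unitSphere (n+1), g (φ x) = x := fun x hx =>
    hinj.leftInvOn_invFunOn hx
  -- Smoothness of g
  have hgsmooth : ContDiffOn ℝ (⊤ : ℕ∞) g T := by
    intro z₀ hz₀
    have hx₀S : g z₀ ∈ unitSphere (n+1) := hgmem z₀ hz₀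
    have hx₀φ : φ (g z₀) = z₀ := hgeq z₀ hz₀
    have hx₀Φ : Φ (g z₀) = z₀ := (hφΦ _ hx₀S).trans hx₀φ
    have hx₀0 : g z₀ ≠ 0 := hSne _ hx₀S
    obtain ⟨e, he⟩ := key (g z₀) (hSK hx₀S)
    have hcd : ContDiffAt ℝ (⊤ : ℕ∞) Φ (g z₀) := hΦcd _ hx₀0
    have hψcd : ContDiffAt ℝ (⊤ : ℕ∞) (hcd.localInverse he (by simp)) z₀ := by
      have h := hcd.to_localInverse he (by simp)
      rwa [hx₀Φ] at h
    set ψ : Euc (n+1) → Euc (n+1) := hcd.localInverse he (by simp) with hψdef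
    have hψz₀ : ψ z₀ = g z₀ := by
      have h := hcd.localInverse_apply_image he (by simp)
      rwa [hx₀Φ] at h
    have hstrict : HasStrictFDerivAt Φ (e : Euc (n+1) →L[ℝ] Euc (n+1)) (g z₀) :=
      hcd.hasStrictFDerivAt' he (by simp)
    have hright : ∀ᶠ z in nhds z₀, Φ (ψ z) = z := by
      rw [← hx₀Φ]
      exact hstrict.eventually_right_inverse
    have hnear : ∀ᶠ z in nhds z₀, ψ z ∈ W :=
      hψcd.continuousAt.eventually_mem (hWopen.mem_nhds (hψz₀ ▸ hSW hx₀S))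
    have hev : ∀ᶠ z in nhdsWithin z₀ T, g z = ψ z := by
      filter_upwards [(hright.and hnear).filter_mono nhdsWithin_le_nhds,
        self_mem_nhdsWithin] with z hz hzT
      obtain ⟨hz1, hz2⟩ := hz
      have hψ0 : ψ z ≠ 0 := fun h0 => hKU (hWK hz2) h0
      have h3 : ‖z‖ = c * ‖ψ z‖ := by
        conv_lhs => rw [← hz1]
        exact hnorm (ψ z) hψ0 t
      have h4 : ‖z‖ = c := mem_sphere_zero_iff_norm.1 hzT
      have h5 : ‖ψ z‖ = 1 := by
        have h7 : c * ‖ψ z‖ = c * 1 := by rw [← h3, h4, mul_one]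
        exact mul_left_cancel₀ hcpos.ne' h7
      have hψS : ψ z ∈ unitSphere (n+1) := (hSmem _).2 h5
      have h6 : φ (ψ z) = z := by rw [← hφΦ (ψ z) hψS]; exact hz1
      calc g z = g (φ (ψ z)) := by rw [h6]
        _ = ψ z := hgleft _ hψS
    exact (hψcd.contDiffWithinAt).congr_of_eventuallyEq hev
      ((hev.self_of_nhdsWithin hz₀))
  exact ⟨g, ⟨hmaps, hinj, hTsub⟩, hφsm, hgsmooth,
    fun x hx => hgleft x hx, fun z hz => hgeq z hz⟩
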